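/- Let S be a compact Hausdorff second-countable topological space, I ⊂ ℝ an open interval containing 0, M a Hausdorff topological space, and Σ : S × I → M a continuous map which is locally injective and whose restriction to S × {0} is injective. Then there exists δ > 0 with (-δ,δ) ⊆ I such that the restriction of Σ to S × (-δ,δ) is injective. -/
import Mathlib


/-- Let `S` be a compact Hausdorff second-countable space, `I = (a,b) ⊂ ℝ` an open interval
containing `0`, `M` a Hausdorff space, and `Σ : S × I → M` continuous, locally injective, and
injective on `S × {0}`. Then there is `δ > 0` with `(-δ,δ) ⊆ I` such that `Σ` is injective
on `S × (-δ,δ)`. -/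
theorem stmt4 (S M : Type*) [TopologicalSpace S] [CompactSpace S] [T2Space S]
    [SecondCountableTopology S] [TopologicalSpace M] [T2Space M]
    (a b : ℝ) (ha : a < 0) (hb : 0 < b)
    (f : S × ℝ → M)
    (hcont : ContinuousOn f (Set.univ ×ˢ Set.Ioo a b))
    (hloc : ∀ z ∈ (Set.univ : Set S) ×ˢ Set.Ioo a b,
      ∃ U ∈ nhds z, Set.InjOn f (U ∩ (Set.univ : Set S) ×ˢ Set.Ioo a b))
    (hinj : Set.InjOn f ((Set.univ : Set S) ×ˢ ({0} : Set ℝ))) :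
    ∃ δ > 0, Set.Ioo (-δ) δ ⊆ Set.Ioo a b ∧
      Set.InjOn f ((Set.univ : Set S) ×ˢ Set.Ioo (-δ) δ) := by
  by_contra hcon
  push_neg at hcon
  set ε := min (-a) b with hε
  have hε0 : 0 < ε := lt_min (neg_pos.mpr ha) hb
  have hsub : ∀ δ : ℝ, δ ≤ ε → Set.Ioo (-δ) δ ⊆ Set.Ioo a b := by
    intro δ hδε x hx
    have h1 : δ ≤ -a := le_trans hδε (min_le_left _ _)
    have h2 : δ ≤ b := le_trans hδε (min_le_right _ _)
    exact ⟨by linarith [hx.1], by linarith [hx.2]⟩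
  -- counterexample sequences
  have key : ∀ n : ℕ, ∃ z w : S × ℝ,
      z ∈ (Set.univ : Set S) ×ˢ Set.Ioo (-(min (1/((n:ℝ)+1)) ε)) (min (1/((n:ℝ)+1)) ε) ∧
      w ∈ (Set.univ : Set S) ×ˢ Set.Ioo (-(min (1/((n:ℝ)+1)) ε)) (min (1/((n:ℝ)+1)) ε) ∧
      f z = f w ∧ z ≠ w := by
    intro n
    have hδ : (0:ℝ) < min (1/((n:ℝ)+1)) ε := lt_min (by positivity) hε0
    have := hcon _ hδ (hsub _ (min_le_right _ _))
    rw [Set.InjOn] at this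
    push_neg at this
    obtain ⟨z, hz, w, hw, hfe, hne⟩ := this
    exact ⟨z, w, hz, hw, hfe, hne⟩
  choose z w hz hw hfe hne using key
  -- second coordinates tend to 0
  have hbound : ∀ (u : ℕ → S × ℝ)
      (hu : ∀ n : ℕ, u n ∈ (Set.univ : Set S) ×ˢ
        Set.Ioo (-(min (1/((n:ℝ)+1)) ε)) (min (1/((n:ℝ)+1)) ε)),
      Filter.Tendsto (fun n => (u n).2) Filter.atTop (nhds 0) := by
    intro u hu
    refine squeeze_zero_norm (a := fun n : ℕ => 1/((n:ℝ)+1)) ?_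
      tendsto_one_div_add_atTop_nhds_zero_nat
    · intro n
      have h := (hu n).2
      have habs : |(u n).2| < min (1/((n:ℝ)+1)) ε := abs_lt.mpr ⟨h.1, h.2⟩
      exact le_of_lt (lt_of_lt_of_le habs (min_le_left _ _))
  have hz2 := hbound z hz
  have hw2 := hbound w hw
  -- extract convergent subsequences of first coordinates
  obtain ⟨s, -, φ, hφ, hφlim⟩ :=
    IsCompact.tendsto_subseq (x := fun n => (z n).1) isCompact_univ
      (fun n => Set.mem_univ _)
  obtain ⟨s', -, ψ, hψ, hψlim⟩ :=
    IsCompact.tendsto_subseq (x := fun n => (w (φ n)).1) isCompact_univ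
      (fun n => Set.mem_univ _)
  set σ : ℕ → ℕ := φ ∘ ψ with hσ
  have hσmono : StrictMono σ := hφ.comp hψ
  -- limits along σ
  have hzlim : Filter.Tendsto (fun n => z (σ n)) Filter.atTop (nhds (s, 0)) := by
    rw [nhds_prod_eq]
    apply Filter.Tendsto.prodMk
    · exact hφlim.comp hψ.tendsto_atTop
    · exact hz2.comp hσmono.tendsto_atTop
  have hwlim : Filter.Tendsto (fun n => w (σ n)) Filter.atTop (nhds (s', 0)) := by
    rw [nhds_prod_eq]
    apply Filter.Tendsto.prodMk
    · exact hψlim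
    · exact hw2.comp hσmono.tendsto_atTop
  have hopen : IsOpen ((Set.univ : Set S) ×ˢ Set.Ioo a b) :=
    isOpen_univ.prod isOpen_Ioo
  have hmem0 : ∀ t : S, (t, (0:ℝ)) ∈ (Set.univ : Set S) ×ˢ Set.Ioo a b :=
    fun t => ⟨Set.mem_univ _, ha, hb⟩
  have hca : ∀ t : S, ContinuousAt f (t, (0:ℝ)) := fun t =>
    hcont.continuousAt (hopen.mem_nhds (hmem0 t))
  -- f(s,0) = f(s',0)
  have hfz : Filter.Tendsto (fun n => f (z (σ n))) Filter.atTop (nhds (f (s, 0))) :=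
    (hca s).tendsto.comp hzlim
  have hfw : Filter.Tendsto (fun n => f (w (σ n))) Filter.atTop (nhds (f (s', 0))) :=
    (hca s').tendsto.comp hwlim
  have hfeq : f (s, 0) = f (s', 0) := by
    apply tendsto_nhds_unique _ hfw
    simpa only [hfe] using hfz
  have hss' : s = s' := by
    have := hinj (Set.mk_mem_prod (Set.mem_univ s) (Set.mem_singleton (0:ℝ))) (Set.mk_mem_prod (Set.mem_univ s') (Set.mem_singleton (0:ℝ))) hfeq
    exact (Prod.mk.injEq _ _ _ _).mp this |>.1
  subst hss'
  -- local injectivity at (s,0) contradicts z n ≠ w n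
  obtain ⟨U, hU, hUinj⟩ := hloc (s, 0) (hmem0 s)
  have hzU : ∀ᶠ n in Filter.atTop, z (σ n) ∈ U := hzlim hU
  have hwU : ∀ᶠ n in Filter.atTop, w (σ n) ∈ U := hwlim hU
  obtain ⟨n, hnz, hnw⟩ := (hzU.and hwU).exists
  have hzin : z (σ n) ∈ (Set.univ : Set S) ×ˢ Set.Ioo a b :=
    ⟨Set.mem_univ _, hsub _ (min_le_right _ _) ⟨(hz (σ n)).2.1, (hz (σ n)).2.2⟩⟩
  have hwin : w (σ n) ∈ (Set.univ : Set S) ×ˢ Set.Ioo a b :=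
    ⟨Set.mem_univ _, hsub _ (min_le_right _ _) ⟨(hw (σ n)).2.1, (hw (σ n)).2.2⟩⟩
  exact hne (σ n) (hUinj ⟨hnz, hzin⟩ ⟨hnw, hwin⟩ (hfe (σ n)))
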